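/- Local reasoning III: Suppose the interface I := Comp(f) ∩ Comp(g) is nonempty and is an input to g (i.e., g_I : Beh(g) → Beh(I) is surjective). For α ∈ ℒ(I) and negative β ∈ ℒ(Comp(g))^□: if f,𝒱 ⊭ α (some behaviour of f fails α) and g,𝒱 ⊨ ¬α → ¬β, then f⊗g,𝒱 ⊭ β. -/

import Mathlib

/-- A system: a set of behaviours `B` together with a map into component snapshots. -/
structure System (Comp : Type) (Beh : Comp → Type) where
  B : Type
  C : Set Comp
  f : B → (c : Comp) → c ∈ C → Beh c

variable {Comp : Type} {Beh : Comp → Type}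

/-- `σ` is an implementation of `g` in `f`: `Comp(g) ⊆ Comp(f)` and `f_{Comp(g)} = g ∘ σ`. -/
def Implements (f g : System Comp Beh) (σ : f.B → g.B) : Prop :=
  g.C ⊆ f.C ∧ ∀ (b : f.B) (c : Comp) (hg : c ∈ g.C) (hf : c ∈ f.C),
    f.f b c hf = g.f (σ b) c hg
/-- `(x,y)` is compatible: the interface is empty or `f_I(x) = g_I(y)`. -/
def Compatible (f g : System Comp Beh) (x : f.B) (y : g.B) : Prop :=
  f.C ∩ g.C = ∅ ∨
    ∀ (c : Comp) (hf : c ∈ f.C) (hg : c ∈ g.C), f.f x c hf = g.f y c hg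

open Classical in
/-- The canonical free composition `f ⊗ g`. -/
noncomputable def tensor (f g : System Comp Beh) : System Comp Beh where
  B := {p : f.B × g.B // Compatible f g p.1 p.2}
  C := f.C ∪ g.C
  f := fun p c hc =>
    if hf : c ∈ f.C then f.f p.val.1 c hf
    else g.f p.val.2 c (Or.resolve_left hc hf)
/-- Formulas of the modal logic `ℒ(C)^□` (atoms, ∧, ¬, □). -/
inductive Fml (Comp : Type) (Var : Comp → Type) : Type
  | atom (c : Comp) (p : Var c)
  | and (φ ψ : Fml Comp Var)
  | not (φ : Fml Comp Var)
  | box (φ : Fml Comp Var)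

variable {Var : Comp → Type}

/-- Satisfaction `f, 𝒱, x ⊨ φ`. -/
def Sat (V : (c : Comp) → Var c → Set (Beh c)) (f : System Comp Beh) :
    f.B → Fml Comp Var → Prop
  | x, .atom c p => ∃ hc : c ∈ f.C, f.f x c hc ∈ V c p
  | x, .and φ ψ => Sat V f x φ ∧ Sat V f x ψ
  | x, .not φ => ¬ Sat V f x φ
  | _, .box φ => ∀ y : f.B, Sat V f y φ

/-- The formula only uses atoms over the components in `C`. -/
def InLogic (C : Set Comp) : Fml Comp Var → Prop
  | .atom c _ => c ∈ C
  | .and φ ψ => InLogic C φ ∧ InLogic C ψ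
  | .not φ => InLogic C φ
  | .box φ => InLogic C φ

/-- Formulas of the elementary logic: no `□`. -/
def Elementary : Fml Comp Var → Prop
  | .atom _ _ => True
  | .and φ ψ => Elementary φ ∧ Elementary ψ
  | .not φ => Elementary φ
  | .box _ => False

/-- Classical implication `φ → ψ := ¬(φ ∧ ¬ψ)`. -/
def Fml.imp (φ ψ : Fml Comp Var) : Fml Comp Var := .not (.and φ (.not ψ))

/-- `f, 𝒱 ⊨ φ`: satisfaction at all behaviours. -/
def SatAll (V : (c : Comp) → Var c → Set (Beh c)) (f : System Comp Beh)
    (φ : Fml Comp Var) : Prop :=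
  ∀ x : f.B, Sat V f x φ
mutual
  /-- Positive: no `□` in the scope of an odd number of `¬`. -/
  def PosFml : Fml Comp Var → Prop
    | .atom _ _ => True
    | .and φ ψ => PosFml φ ∧ PosFml ψ
    | .not φ => NegFml φ
    | .box φ => PosFml φ
  /-- Negative: no `□` in the scope of an even number of `¬`. -/
  def NegFml : Fml Comp Var → Prop
    | .atom _ _ => True
    | .and φ ψ => NegFml φ ∧ NegFml ψ
    | .not φ => PosFml φ
    | .box _ => False
end

/-!
A behaviour `x` of `f` failing `α` is matched, since the interface is an input to `g`, by a
behaviour `y` of `g` with the same interface snapshot; `(x, y)` is then a behaviour of `f ⊗ g`.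
As `α` is elementary over the interface, `y` fails `α` too, hence fails `β`. The right
projection implements `g` in `f ⊗ g`, and negative formulas pass from an implementing system
down to the implemented one, so `(x, y)` cannot satisfy `β` either.
-/

theorem sat_iff_of_agreeOn (V : (c : Comp) → Var c → Set (Beh c)) {f g : System Comp Beh}
    {C : Set Comp} (hCf : C ⊆ f.C) (hCg : C ⊆ g.C) {x : f.B} {y : g.B}
    (hxy : ∀ c (hc : c ∈ C), f.f x c (hCf hc) = g.f y c (hCg hc)) :
    ∀ φ : Fml Comp Var, Elementary φ → InLogic C φ → (Sat V f x φ ↔ Sat V g y φ)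
  | .atom c p, _, hc => by
    simp only [Sat, exists_prop_of_true (hCf hc), exists_prop_of_true (hCg hc), hxy c hc]
  | .and φ ψ, ⟨hφ, hψ⟩, ⟨lφ, lψ⟩ => by
    simp only [Sat, sat_iff_of_agreeOn V hCf hCg hxy φ hφ lφ,
      sat_iff_of_agreeOn V hCf hCg hxy ψ hψ lψ]
  | .not φ, hφ, lφ => by
    simp only [Sat, sat_iff_of_agreeOn V hCf hCg hxy φ hφ lφ]

theorem Implements.sat_transfer (V : (c : Comp) → Var c → Set (Beh c)) {f g : System Comp Beh}
    {σ : f.B → g.B} (hσ : Implements f g σ) :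
    ∀ φ : Fml Comp Var, InLogic g.C φ → ∀ x : f.B,
      (PosFml φ → Sat V g (σ x) φ → Sat V f x φ) ∧
      (NegFml φ → Sat V f x φ → Sat V g (σ x) φ)
  | .atom c p, hc, x => by
    have hfg := hσ.2 x c hc (hσ.1 hc)
    exact ⟨fun _ ⟨_, hv⟩ => ⟨hσ.1 hc, hfg ▸ hv⟩, fun _ ⟨_, hv⟩ => ⟨hc, hfg ▸ hv⟩⟩
  | .and φ ψ, ⟨lφ, lψ⟩, x =>
    have ihφ := hσ.sat_transfer V φ lφ x
    have ihψ := hσ.sat_transfer V ψ lψ x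
    ⟨fun ⟨pφ, pψ⟩ ⟨sφ, sψ⟩ => ⟨ihφ.1 pφ sφ, ihψ.1 pψ sψ⟩,
      fun ⟨nφ, nψ⟩ ⟨sφ, sψ⟩ => ⟨ihφ.2 nφ sφ, ihψ.2 nψ sψ⟩⟩
  | .not φ, lφ, x =>
    have ih := hσ.sat_transfer V φ lφ x
    ⟨fun hn hs h => hs (ih.2 hn h), fun hp hs h => hs (ih.1 hp h)⟩
  | .box φ, lφ, x =>
    ⟨fun hp hs y => (hσ.sat_transfer V φ lφ y).1 hp (hs (σ y)), False.elim⟩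

theorem Implements.sat_of_negFml (V : (c : Comp) → Var c → Set (Beh c))
    {f g : System Comp Beh} {σ : f.B → g.B} (hσ : Implements f g σ) {φ : Fml Comp Var}
    (hφ : NegFml φ) (lφ : InLogic g.C φ) {x : f.B} (hx : Sat V f x φ) : Sat V g (σ x) φ :=
  (hσ.sat_transfer V φ lφ x).2 hφ hx

theorem sat_imp_iff (V : (c : Comp) → Var c → Set (Beh c)) (f : System Comp Beh) (x : f.B)
    (φ ψ : Fml Comp Var) : Sat V f x (φ.imp ψ) ↔ (Sat V f x φ → Sat V f x ψ) := by
  simp only [Fml.imp, Sat]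
  tauto

theorem tensor_implements_right (f g : System Comp Beh) :
    Implements (tensor f g) g (fun p => p.val.2) := by
  classical
  refine ⟨Set.subset_union_right, fun p c hg _ => ?_⟩
  change (if hf : c ∈ f.C then f.f p.val.1 c hf else _) = _
  split_ifs with hf
  · rcases p.property with hempty | hagree
    · exact absurd (hempty ▸ ⟨hf, hg⟩ : c ∈ (∅ : Set Comp)) id
    · exact hagree c hf hg
  · rfl

/-- Local reasoning III: if the interface `I = Comp(f) ∩ Comp(g)`
is nonempty and is an input to `g` (the projection `g_I` is surjective), `α ∈ ℒ(I)`,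
`β` a negative formula of `ℒ(Comp(g))^□`, some behaviour of `f` fails `α`, and
`g,𝒱 ⊨ ¬α → ¬β`, then some behaviour of `f ⊗ g` fails `β`. -/
theorem local_reasoning_III (V : (c : Comp) → Var c → Set (Beh c))
    (f g : System Comp Beh)
    (hI : (f.C ∩ g.C).Nonempty)
    (hinput : ∀ b : (c : Comp) → c ∈ f.C ∩ g.C → Beh c,
      ∃ y : g.B, ∀ (c : Comp) (hc : c ∈ f.C ∩ g.C), g.f y c hc.2 = b c hc)
    (α β : Fml Comp Var)
    (hαel : Elementary α) (hαlog : InLogic (f.C ∩ g.C) α)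
    (hβneg : NegFml β) (hβlog : InLogic g.C β)
    (hfα : ∃ x : f.B, ¬ Sat V f x α)
    (hgαβ : SatAll V g (Fml.imp (.not α) (.not β))) :
    ∃ p : (tensor f g).B, ¬ Sat V (tensor f g) p β := by
  obtain ⟨x, hxα⟩ := hfα
  obtain ⟨y, hy⟩ := hinput (fun c hc => f.f x c hc.1)
  have hyα : ¬ Sat V g y α := fun h =>
    hxα ((sat_iff_of_agreeOn V Set.inter_subset_left Set.inter_subset_right
      (fun c hc => (hy c hc).symm) α hαel hαlog).2 h)
  have hyβ : ¬ Sat V g y β := (sat_imp_iff V g y _ _).1 (hgαβ y) hyα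
  have hxy : Compatible f g x y := Or.inr fun c hf hg => (hy c ⟨hf, hg⟩).symm
  exact ⟨⟨(x, y), hxy⟩, fun hβ =>
    hyβ ((tensor_implements_right f g).sat_of_negFml V hβneg hβlog hβ)⟩
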